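/- arXiv:1610.09401 — 3 statements merged into one kernel-verified Lean document; each statement's English description precedes it below -/
import Mathlib

section
/- Let X ⊆ ℝ^m be a closed set, f : X → ℝ^n a continuous function, a ∈ X, and C, ℓ > 0. Suppose there is a neighbourhood W of (a, f(a)) in ℝ^m × ℝ^n such that for every z = (x, f(x)) ∈ Γ_f ∩ W one has d(z, X × {f(a)}) ≥ C · d(z, (X × {f(a)}) ∩ Γ_f)^ℓ. Then there is a neighbourhood U of a in ℝ^m such that ‖f(x) − f(a)‖ ≥ C · d(x, f^{−1}(f(a)))^ℓ for all x ∈ X ∩ U. -/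
open Metric Set Filter Topology

/-- The embedding of `ℝ^m × ℝ^n` into the same space equipped with the sum norm
`‖(x,y)‖ = ‖x‖ + ‖y‖` (the `L¹` product of the Euclidean spaces). -/
noncomputable def sumNormEmb (m n : ℕ) :
    EuclideanSpace ℝ (Fin m) × EuclideanSpace ℝ (Fin n) →
      WithLp 1 (EuclideanSpace ℝ (Fin m) × EuclideanSpace ℝ (Fin n)) :=
  (WithLp.equiv 1 _).symm

/-
The graph point `(x, f x)` lies at sum-distance `‖f x - f a‖` from `(x, f a) ∈ X × {f a}`, and every
point `(x', f a)` of `(X × {f a}) ∩ Γ_f` lies at sum-distance at least `‖x - x'‖ ≥ d(x, f⁻¹(f a))`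
from it. Hence regular separation at `(x, f x)` yields the Łojasiewicz inequality at `x`, and
continuity of `x ↦ (x, f x)` on `X` pulls the neighbourhood `W` back to one of `a`.
-/

theorem Metric.infDist_le_infDist_of_forall_exists_dist_le {α β : Type*} [PseudoMetricSpace α]
    [PseudoMetricSpace β] {x : α} {s : Set α} {p : β} {t : Set β} (ht : t.Nonempty)
    (h : ∀ y ∈ t, ∃ y' ∈ s, dist x y' ≤ dist p y) :
    infDist x s ≤ infDist p t := by
  refine le_of_forall_gt fun r hr => ?_
  obtain ⟨y, hy, hyr⟩ := (infDist_lt_iff ht).1 hr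
  obtain ⟨y', hy', hle⟩ := h y hy
  exact (infDist_le_dist_of_mem hy').trans_lt (hle.trans_lt hyr)

section GraphSeparation

variable {E F : Type*} [SeminormedAddCommGroup E] [SeminormedAddCommGroup F]

theorem infDist_toLp_graph_prod_singleton_le {X : Set E} {f : E → F} {x : E} (hx : x ∈ X)
    (b : F) :
    infDist (WithLp.toLp 1 (x, f x)) (WithLp.toLp 1 '' (X ×ˢ {b})) ≤ ‖f x - b‖ :=
  calc infDist (WithLp.toLp 1 (x, f x)) (WithLp.toLp 1 '' (X ×ˢ {b}))
      _ ≤ dist (WithLp.toLp 1 (x, f x)) (WithLp.toLp 1 (x, b)) :=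
        infDist_le_dist_of_mem (mem_image_of_mem _ (mk_mem_prod hx rfl))
      _ = ‖f x - b‖ := by
        rw [WithLp.prod_dist_eq_of_L1]; simp [dist_eq_norm]

theorem infDist_fiber_le_infDist_toLp_prod_singleton_inter_graph {X : Set E} {f : E → F}
    {b : F} (hb : b ∈ f '' X) (x : E) (y : F) :
    infDist x {x' ∈ X | f x' = b} ≤
      infDist (WithLp.toLp 1 (x, y))
        (WithLp.toLp 1 '' ((X ×ˢ {b}) ∩ {z | z.1 ∈ X ∧ z.2 = f z.1})) := by
  obtain ⟨a, ha, rfl⟩ := hb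
  refine infDist_le_infDist_of_forall_exists_dist_le ?_ ?_
  · exact ⟨_, mem_image_of_mem _ ⟨mk_mem_prod ha rfl, ha, rfl⟩⟩
  rintro _ ⟨w, ⟨⟨hw₁, hw₂⟩, -, hwf⟩, rfl⟩
  refine ⟨w.1, ⟨hw₁, hwf ▸ hw₂⟩, ?_⟩
  calc dist x w.1 ≤ dist x w.1 + dist y w.2 := le_add_of_nonneg_right dist_nonneg
    _ = dist (WithLp.toLp 1 (x, y)) (WithLp.toLp 1 w) := by
        rw [WithLp.prod_dist_eq_of_L1]; rfl

end GraphSeparation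

theorem lojasiewicz_of_regular_separation_general
    (m n : ℕ) (X : Set (EuclideanSpace ℝ (Fin m)))
    (f : EuclideanSpace ℝ (Fin m) → EuclideanSpace ℝ (Fin n))
    (hf : ContinuousOn f X)
    (a : EuclideanSpace ℝ (Fin m)) (ha : a ∈ X)
    (C ℓ : ℝ) (hC : 0 < C) (hℓ : 0 < ℓ)
    (Γ : Set (EuclideanSpace ℝ (Fin m) × EuclideanSpace ℝ (Fin n)))
    (hΓ : Γ = {z | z.1 ∈ X ∧ z.2 = f z.1})
    (hsep : ∃ W ∈ 𝓝 ((a, f a) : EuclideanSpace ℝ (Fin m) × EuclideanSpace ℝ (Fin n)),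
      ∀ z ∈ Γ ∩ W,
        infDist (sumNormEmb m n z) (sumNormEmb m n '' (X ×ˢ ({f a} : Set (EuclideanSpace ℝ (Fin n)))))
          ≥ C * (infDist (sumNormEmb m n z)
              (sumNormEmb m n '' ((X ×ˢ ({f a} : Set (EuclideanSpace ℝ (Fin n)))) ∩ Γ))) ^ ℓ) :
    ∃ U ∈ 𝓝 a, ∀ x ∈ X ∩ U,
      ‖f x - f a‖ ≥ C * (infDist x {x' ∈ X | f x' = f a}) ^ ℓ := by
  subst hΓ
  obtain ⟨W, hW, hsep⟩ := hsep
  have hgraph : ∀ᶠ x in 𝓝[X] a, (x, f x) ∈ W :=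
    (continuousWithinAt_id.prodMk (hf a ha)).eventually_mem hW
  obtain ⟨U, hU, hUW⟩ := mem_nhdsWithin_iff_exists_mem_nhds_inter.1 hgraph
  refine ⟨U, hU, fun x ⟨hxX, hxU⟩ => ?_⟩
  calc C * infDist x {x' ∈ X | f x' = f a} ^ ℓ
      _ ≤ C * infDist (sumNormEmb m n (x, f x))
            (sumNormEmb m n '' ((X ×ˢ {f a}) ∩ {z | z.1 ∈ X ∧ z.2 = f z.1})) ^ ℓ := by
        have hfiber := infDist_fiber_le_infDist_toLp_prod_singleton_inter_graph
          (f := f) ⟨a, ha, rfl⟩ x (f x)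
        exact mul_le_mul_of_nonneg_left (Real.rpow_le_rpow infDist_nonneg hfiber hℓ.le) hC.le
      _ ≤ infDist (sumNormEmb m n (x, f x)) (sumNormEmb m n '' (X ×ˢ {f a})) :=
        hsep _ ⟨⟨hxX, rfl⟩, hUW ⟨hxU, hxX⟩⟩
      _ ≤ ‖f x - f a‖ := infDist_toLp_graph_prod_singleton_le hxX (f a)

/-- if the graph of `f` is regularly separated from `X × {f a}` near
`(a, f a)` with constants `C, ℓ`, then `f` satisfies the Łojasiewicz inequality
`‖f x - f a‖ ≥ C · d(x, f⁻¹(f a))^ℓ` near `a`. -/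
theorem lojasiewicz_of_regular_separation
    (m n : ℕ) (X : Set (EuclideanSpace ℝ (Fin m)))
    (f : EuclideanSpace ℝ (Fin m) → EuclideanSpace ℝ (Fin n))
    (hX : IsClosed X) (hf : ContinuousOn f X)
    (a : EuclideanSpace ℝ (Fin m)) (ha : a ∈ X)
    (C ℓ : ℝ) (hC : 0 < C) (hℓ : 0 < ℓ)
    (Γ : Set (EuclideanSpace ℝ (Fin m) × EuclideanSpace ℝ (Fin n)))
    (hΓ : Γ = {z | z.1 ∈ X ∧ z.2 = f z.1})
    (hsep : ∃ W ∈ 𝓝 ((a, f a) : EuclideanSpace ℝ (Fin m) × EuclideanSpace ℝ (Fin n)),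
      ∀ z ∈ Γ ∩ W,
        infDist (sumNormEmb m n z) (sumNormEmb m n '' (X ×ˢ ({f a} : Set (EuclideanSpace ℝ (Fin n)))))
          ≥ C * (infDist (sumNormEmb m n z)
              (sumNormEmb m n '' ((X ×ˢ ({f a} : Set (EuclideanSpace ℝ (Fin n)))) ∩ Γ))) ^ ℓ) :
    ∃ U ∈ 𝓝 a, ∀ x ∈ X ∩ U,
      ‖f x - f a‖ ≥ C * (infDist x {x' ∈ X | f x' = f a}) ^ ℓ :=
  lojasiewicz_of_regular_separation_general m n X f hf a ha C ℓ hC hℓ Γ hΓ hsep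
end

section
/- Let X ⊆ ℝ^m be a closed set, f : X → ℝ^n a continuous function, a ∈ X, and C, ℓ > 0. Suppose there is a neighbourhood U of a in ℝ^m such that ‖f(x) − f(a)‖ ≥ C · d(x, f^{−1}(f(a)))^ℓ for all x ∈ X ∩ U. Then there is a neighbourhood W of (a, f(a)) in ℝ^m × ℝ^n such that for every z = (x, f(x)) ∈ Γ_f ∩ W one has d(z, X × {f(a)}) ≥ [ (C/(C+1)) · d(z, (X × {f(a)}) ∩ Γ_f) ]^{max{ℓ,1}}. -/
open Metric Set Filter Topology

lemma loj_key (C ℓ : ℝ) (hC : 0 < C) (hℓ : 0 < ℓ) :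
    ∃ ε > 0, ∀ e r : ℝ, 0 ≤ e → e ≤ ε → 0 ≤ r → C * r ^ ℓ ≤ e →
      (C / (C + 1) * (r + e)) ^ max ℓ 1 ≤ e := by
  have hC1 : (0:ℝ) < C + 1 := by linarith
  have hc : 0 < C / (C + 1) := div_pos hC hC1
  have hr_bound : ∀ e r : ℝ, 0 ≤ e → 0 ≤ r → C * r ^ ℓ ≤ e → r ≤ (e / C) ^ ℓ⁻¹ := by
    intro e r he hr h
    have h1 : r ^ ℓ ≤ e / C := (le_div_iff₀' hC).mpr h
    have h2 : (r ^ ℓ) ^ ℓ⁻¹ ≤ (e / C) ^ ℓ⁻¹ :=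
      Real.rpow_le_rpow (Real.rpow_nonneg hr ℓ) h1 (by positivity)
    rwa [Real.rpow_rpow_inv hr hℓ.ne'] at h2
  have hzero : ∀ r : ℝ, 0 ≤ r → C * r ^ ℓ ≤ 0 → (C / (C + 1) * (r + 0)) ^ max ℓ 1 ≤ 0 := by
    intro r hr h
    have h1 : r ^ ℓ ≤ 0 := by nlinarith [Real.rpow_nonneg hr ℓ]
    have h2 : r ^ ℓ = 0 := le_antisymm h1 (Real.rpow_nonneg hr ℓ)
    have h3 : r = 0 := (Real.rpow_eq_zero hr hℓ.ne').mp h2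
    rw [h3]
    rw [show (C / (C + 1) * ((0:ℝ) + 0)) = 0 by ring,
      Real.zero_rpow (by positivity : max ℓ 1 ≠ 0)]
  rcases le_or_gt ℓ 1 with hl1 | hl1
  · -- case ℓ ≤ 1 : exponent is 1, ε = C
    refine ⟨C, hC, fun e r he heε hr h => ?_⟩
    have hmax : max ℓ 1 = 1 := max_eq_right hl1
    rcases eq_or_lt_of_le he with rfl | he0
    · simpa using hzero r hr h
    · have hrle : r ≤ e / C := by
        have h1 := hr_bound e r he hr h
        have h2 : (e / C) ^ ℓ⁻¹ ≤ (e / C) ^ (1:ℝ) :=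
          Real.rpow_le_rpow_of_exponent_ge (by positivity)
            ((div_le_one hC).mpr heε) ((one_le_inv₀ hℓ).mpr hl1)
        rw [Real.rpow_one] at h2
        exact h1.trans h2
      rw [hmax, Real.rpow_one]
      rw [le_div_iff₀ hC] at hrle
      rw [div_mul_eq_mul_div, div_le_iff₀ hC1]
      nlinarith
  · -- case ℓ > 1 : exponent is ℓ
    have hmax : max ℓ 1 = ℓ := max_eq_left hl1.le
    set q : ℝ := 1 - ℓ⁻¹ with hq
    have hq0 : 0 < q := by
      have : ℓ⁻¹ < 1 := (inv_lt_one₀ hℓ).mpr hl1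
      simp [hq]; linarith
    have hCq : C ^ q < C + 1 := by
      rcases le_or_gt C 1 with hCle | hCgt
      · have : C ^ q ≤ 1 := Real.rpow_le_one hC.le hCle hq0.le
        linarith
      · have : C ^ q ≤ C ^ (1:ℝ) :=
          Real.rpow_le_rpow_of_exponent_le hCgt.le (by simp [hq]; positivity)
        rw [Real.rpow_one] at this
        linarith
    set β : ℝ := C + 1 - C ^ q with hβ
    have hβ0 : 0 < β := by simp [hβ]; linarith
    refine ⟨(β / C) ^ q⁻¹, by positivity, fun e r he heε hr h => ?_⟩
    rcases eq_or_lt_of_le he with rfl | he0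
    · simpa using hzero r hr h
    · rw [hmax]
      -- main step : C/(C+1) * (r + e) ≤ e ^ ℓ⁻¹
      have key : C / (C + 1) * (r + e) ≤ e ^ ℓ⁻¹ := by
        have hrle := hr_bound e r he hr h
        -- C * r ≤ C^q * e^ℓ⁻¹
        have h1 : C * r ≤ C ^ q * e ^ ℓ⁻¹ := by
          have : C * r ≤ C * (e / C) ^ ℓ⁻¹ := by nlinarith
          refine this.trans (le_of_eq ?_)
          rw [Real.div_rpow he hC.le, hq, Real.rpow_sub hC, Real.rpow_one]
          field_simp
        -- e = e^ℓ⁻¹ * e^q  and  e^q ≤ β / C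
        have heq : e = e ^ ℓ⁻¹ * e ^ q := by
          rw [← Real.rpow_add he0, hq]; simp
        have heqb : e ^ q ≤ β / C := by
          have h2 : e ^ q ≤ ((β / C) ^ q⁻¹) ^ q :=
            Real.rpow_le_rpow he heε hq0.le
          rwa [Real.rpow_inv_rpow (by positivity) hq0.ne'] at h2
        have h3 : C * e ≤ β * e ^ ℓ⁻¹ := by
          have hnn := Real.rpow_nonneg he ℓ⁻¹
          calc C * e = C * (e ^ ℓ⁻¹ * e ^ q) := by rw [← heq]
            _ ≤ β * e ^ ℓ⁻¹ := by
                rw [le_div_iff₀ hC] at heqb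
                nlinarith [mul_le_mul_of_nonneg_right heqb hnn]
        have h4 : C * (r + e) ≤ (C + 1) * e ^ ℓ⁻¹ := by
          have : C ^ q + β = C + 1 := by simp [hβ]
          nlinarith
        rw [div_mul_eq_mul_div, div_le_iff₀ hC1]
        nlinarith [Real.rpow_nonneg he ℓ⁻¹]
      have h5 : (C / (C + 1) * (r + e)) ^ ℓ ≤ (e ^ ℓ⁻¹) ^ ℓ := by
        refine Real.rpow_le_rpow (by positivity) key hℓ.le
      rwa [Real.rpow_inv_rpow he hℓ.ne'] at h5

lemma sumNormEmb_dist (m n : ℕ)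
    (z w : EuclideanSpace ℝ (Fin m) × EuclideanSpace ℝ (Fin n)) :
    dist (sumNormEmb m n z) (sumNormEmb m n w) = dist z.1 w.1 + dist z.2 w.2 := by
  simp only [sumNormEmb]
  rw [WithLp.prod_dist_eq_add (by norm_num)]
  simp [Real.rpow_one]

/-- if `f` satisfies the Łojasiewicz inequality
`‖f x - f a‖ ≥ C · d(x, f⁻¹(f a))^ℓ` near `a`, then the graph of `f` is regularly
separated from `X × {f a}` near `(a, f a)` with constant `C/(C+1)` (inside the power)
and exponent `max ℓ 1`. -/
theorem regular_separation_of_lojasiewicz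
    (m n : ℕ) (X : Set (EuclideanSpace ℝ (Fin m)))
    (f : EuclideanSpace ℝ (Fin m) → EuclideanSpace ℝ (Fin n))
    (hX : IsClosed X) (hf : ContinuousOn f X)
    (a : EuclideanSpace ℝ (Fin m)) (ha : a ∈ X)
    (C ℓ : ℝ) (hC : 0 < C) (hℓ : 0 < ℓ)
    (Γ : Set (EuclideanSpace ℝ (Fin m) × EuclideanSpace ℝ (Fin n)))
    (hΓ : Γ = {z | z.1 ∈ X ∧ z.2 = f z.1})
    (hloj : ∃ U ∈ 𝓝 a, ∀ x ∈ X ∩ U,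
      ‖f x - f a‖ ≥ C * (infDist x {x' ∈ X | f x' = f a}) ^ ℓ) :
    ∃ W ∈ 𝓝 ((a, f a) : EuclideanSpace ℝ (Fin m) × EuclideanSpace ℝ (Fin n)),
      ∀ z ∈ Γ ∩ W,
        infDist (sumNormEmb m n z) (sumNormEmb m n '' (X ×ˢ ({f a} : Set (EuclideanSpace ℝ (Fin n)))))
          ≥ (C / (C + 1) * infDist (sumNormEmb m n z)
              (sumNormEmb m n '' ((X ×ˢ ({f a} : Set (EuclideanSpace ℝ (Fin n)))) ∩ Γ))) ^ max ℓ 1 := by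
  obtain ⟨U, hU, hloj'⟩ := hloj
  obtain ⟨ε, hε, hkey⟩ := loj_key C ℓ hC hℓ
  set F : Set (EuclideanSpace ℝ (Fin m)) := {x' ∈ X | f x' = f a} with hF
  have haF : a ∈ F := ⟨ha, rfl⟩
  -- continuity: find open V with dist (f x) (f a) ≤ ε on V ∩ X
  have hcont : Tendsto f (𝓝[X] a) (𝓝 (f a)) := hf a ha
  have hball : f ⁻¹' closedBall (f a) ε ∈ 𝓝[X] a :=
    hcont (closedBall_mem_nhds (f a) hε)
  obtain ⟨V, hVopen, haV, hV⟩ := mem_nhdsWithin.mp hball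
  refine ⟨(U ∩ V) ×ˢ univ,
    prod_mem_nhds (inter_mem hU (hVopen.mem_nhds haV)) univ_mem, ?_⟩
  rintro z ⟨hzΓ, hzW⟩
  rw [hΓ] at hzΓ
  obtain ⟨hxX, hz2⟩ := hzΓ
  obtain ⟨⟨hxU, hxV⟩, -⟩ := hzW
  set x := z.1 with hx
  set e : ℝ := dist (f x) (f a) with he
  set r : ℝ := infDist x F with hr
  have heε : e ≤ ε := by
    have := hV ⟨hxV, hxX⟩
    simpa [mem_closedBall] using this
  have hre : C * r ^ ℓ ≤ e := by
    have := hloj' x ⟨hxX, hxU⟩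
    rwa [ge_iff_le, ← dist_eq_norm] at this
  have hkey' := hkey e r dist_nonneg heε infDist_nonneg hre
  -- lower bound: e ≤ infDist z' S'
  have hS : e ≤ infDist (sumNormEmb m n z)
      (sumNormEmb m n '' (X ×ˢ ({f a} : Set (EuclideanSpace ℝ (Fin n))))) := by
    refine le_of_not_gt fun hlt => ?_
    have hne : (sumNormEmb m n '' (X ×ˢ ({f a} : Set (EuclideanSpace ℝ (Fin n))))).Nonempty :=
      ⟨_, mem_image_of_mem _ (mk_mem_prod ha rfl)⟩
    obtain ⟨w, hw, hwd⟩ := (infDist_lt_iff hne).mp hlt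
    obtain ⟨⟨w1, w2⟩, ⟨hw1, hw2⟩, rfl⟩ := hw
    rcases hw2 with rfl
    rw [sumNormEmb_dist] at hwd
    have : dist z.2 (f a) = e := by rw [hz2]
    have h2 : e ≤ dist z.1 w1 + dist z.2 (f a) := by
      have hd : (0:ℝ) ≤ dist z.1 w1 := dist_nonneg
      rw [this]; linarith
    exact absurd (h2.trans_lt hwd) (lt_irrefl _)
  -- upper bound: infDist z' T' ≤ r + e
  have hT : infDist (sumNormEmb m n z)
      (sumNormEmb m n '' ((X ×ˢ ({f a} : Set (EuclideanSpace ℝ (Fin n)))) ∩ Γ)) ≤ r + e := by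
    refine le_of_forall_pos_le_add fun δ hδ => ?_
    have hFne : F.Nonempty := ⟨a, haF⟩
    obtain ⟨x', hx'F, hx'd⟩ := (infDist_lt_iff hFne).mp
      (show infDist x F < r + δ by rw [← hr]; linarith)
    have hmem : sumNormEmb m n (x', f a) ∈
        sumNormEmb m n '' ((X ×ˢ ({f a} : Set (EuclideanSpace ℝ (Fin n)))) ∩ Γ) := by
      refine mem_image_of_mem _ ⟨mk_mem_prod hx'F.1 rfl, ?_⟩
      rw [hΓ]; exact ⟨hx'F.1, hx'F.2.symm⟩
    have h3 := infDist_le_dist_of_mem (x := sumNormEmb m n z) hmem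
    rw [sumNormEmb_dist] at h3
    have h4 : dist z.2 (f a) = e := by rw [hz2]
    rw [h4] at h3
    have h5 : dist z.1 x' < r + δ := hx'd
    linarith
  -- combine
  rw [ge_iff_le]
  have hc0 : (0:ℝ) ≤ C / (C + 1) := by positivity
  have h5 : (C / (C + 1) * infDist (sumNormEmb m n z)
        (sumNormEmb m n '' ((X ×ˢ ({f a} : Set (EuclideanSpace ℝ (Fin n)))) ∩ Γ))) ^ max ℓ 1
      ≤ (C / (C + 1) * (r + e)) ^ max ℓ 1 :=
    Real.rpow_le_rpow (mul_nonneg hc0 infDist_nonneg)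
      (mul_le_mul_of_nonneg_left hT hc0) (le_trans zero_le_one (le_max_right ℓ 1))
  exact le_trans (h5.trans hkey') hS
end

section
/- Let q ≥ 1 be an integer and let g : ℝ → ℝ be real-analytic on a neighbourhood of 0 with g(0) = 0 and g not identically zero on any neighbourhood of 0. Define φ(t) = g(t^{1/q}) for t ≥ 0 small. Then there exist constants ρ > 0, c > 0 and θ ∈ (0, 1) such that φ is differentiable on (0, ρ) and |φ′(t)| ≥ c · |φ(t)|^θ for all t ∈ (0, ρ). -/
open Set Filter Topology Asymptotics

/-!
Near `0` an analytic `g` with `g 0 = 0` that is not locally zero factors as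
`g s = s ^ (n + 1) * h s` with `h 0 ≠ 0`, so `g s ≍ s ^ (n + 1)` and `g' s ≍ s ^ n`.
Substituting `s = t ^ (1 / q)` gives `φ t = O(t ^ α)` and `t ^ (α - 1) = O(φ' t)` as `t → 0⁺`,
with `α = (n + 1) / q`. For `θ = α / (α + 1)` one has `α θ ≥ α - 1`, hence for `t ≤ 1`
`|φ t| ^ θ ≲ t ^ (α θ) ≤ t ^ (α - 1) ≲ |φ' t|`.
-/

theorem Filter.Tendsto.isTheta_const {α E F : Type*} [NormedAddCommGroup E]
    [NormedAddCommGroup F] {l : Filter α} {k : α → E} {y : E} (h : Tendsto k l (𝓝 y))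
    (hy : y ≠ 0) {c : F} (hc : c ≠ 0) : k =Θ[l] fun _ ↦ c := by
  refine ⟨isBigO_const_of_tendsto h hc,
    (isBigO_const_left_iff_pos_le_norm hc).2 ⟨‖y‖ / 2, by positivity, ?_⟩⟩
  exact h.norm.eventually (eventually_ge_nhds (half_lt_self (norm_pos_iff.2 hy)))

section AnalyticOrder

variable {𝕜 E : Type*} [NontriviallyNormedField 𝕜] [NormedAddCommGroup E] [NormedSpace 𝕜 E]
  {f : 𝕜 → E} {z₀ : 𝕜} {n : ℕ}

theorem AnalyticAt.isTheta_pow_of_analyticOrderAt_eq (hf : AnalyticAt 𝕜 f z₀)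
    (hn : analyticOrderAt f z₀ = n) : f =Θ[𝓝 z₀] fun z ↦ (z - z₀) ^ n := by
  obtain ⟨k, hk, hk₀, hfk⟩ := hf.analyticOrderAt_eq_natCast.1 hn
  have := (isTheta_refl (fun z ↦ (z - z₀) ^ n) (𝓝 z₀)).smul
    (hk.continuousAt.tendsto.isTheta_const hk₀ (one_ne_zero (α := 𝕜)))
  simpa using (show f =ᶠ[𝓝 z₀] _ from hfk).trans_isTheta this

theorem AnalyticAt.deriv_isTheta_pow_of_analyticOrderAt_eq [CompleteSpace E] [CharZero 𝕜]
    (hf : AnalyticAt 𝕜 f z₀) (hn : analyticOrderAt (f · - f z₀) z₀ = (n + 1 : ℕ)) :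
    deriv f =Θ[𝓝 z₀] fun z ↦ (z - z₀) ^ n := by
  refine hf.deriv.isTheta_pow_of_analyticOrderAt_eq ?_
  rw [← hf.analyticOrderAt_deriv_add_one, Nat.cast_succ] at hn
  exact WithTop.add_right_cancel WithTop.one_ne_top hn

theorem AnalyticAt.exists_analyticOrderAt_eq_succ (hf : AnalyticAt 𝕜 f z₀) (hf₀ : f z₀ = 0)
    (hf' : ∃ᶠ z in 𝓝 z₀, f z ≠ 0) : ∃ n : ℕ, analyticOrderAt f z₀ = (n + 1 : ℕ) := by
  have htop : analyticOrderAt f z₀ ≠ ⊤ := fun h ↦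
    hf' ((analyticOrderAt_eq_top.1 h).mono fun _ hz ↦ not_not_intro hz)
  obtain ⟨m, hm⟩ := ENat.ne_top_iff_exists.1 htop
  have hm₀ : m ≠ 0 := by
    rintro rfl
    exact hf.analyticOrderAt_ne_zero.2 hf₀ hm.symm
  obtain ⟨n, rfl⟩ := Nat.exists_eq_succ_of_ne_zero hm₀
  exact ⟨n, hm.symm⟩

end AnalyticOrder

theorem tendsto_rpow_nhdsGT_zero {p : ℝ} (hp : 0 < p) :
    Tendsto (fun t : ℝ ↦ t ^ p) (𝓝[>] 0) (𝓝[>] 0) := by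
  refine tendsto_nhdsWithin_iff.2 ⟨?_, eventually_nhdsWithin_of_forall fun t ht ↦
    Real.rpow_pos_of_pos ht p⟩
  simpa [Real.zero_rpow hp.ne'] using
    ((Real.continuousAt_rpow_const 0 p (Or.inr hp.le)).tendsto).mono_left nhdsWithin_le_nhds

theorem exists_pos_mul_rpow_le_of_isBigO_rpow {f f' : ℝ → ℝ} {α : ℝ} (hα : 0 < α)
    (hf : f =O[𝓝[>] 0] fun t ↦ t ^ α) (hf' : (fun t ↦ t ^ (α - 1)) =O[𝓝[>] 0] f') :
    ∃ c > 0, ∀ᶠ t in 𝓝[>] 0, c * |f t| ^ (α / (α + 1)) ≤ |f' t| := by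
  set θ := α / (α + 1)
  obtain ⟨C, hC, hfC⟩ := hf.exists_pos
  obtain ⟨C', hC', hf'C'⟩ := hf'.exists_pos
  refine ⟨1 / (C' * C ^ θ), by positivity, ?_⟩
  filter_upwards [hfC.bound, hf'C'.bound, Ioo_mem_nhdsGT one_pos] with t hft hf't ⟨ht₀, ht₁⟩
  rw [Real.norm_eq_abs, Real.norm_eq_abs, abs_of_pos (Real.rpow_pos_of_pos ht₀ _)] at hft hf't
  have hexp : α - 1 ≤ α * θ := by
    rw [mul_div_assoc', le_div_iff₀ (by positivity)]
    nlinarith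
  have hθ : 0 ≤ θ := by positivity
  calc 1 / (C' * C ^ θ) * |f t| ^ θ
      ≤ 1 / (C' * C ^ θ) * (C * t ^ α) ^ θ := by gcongr
    _ = 1 / C' * t ^ (α * θ) := by
        rw [Real.mul_rpow hC.le (Real.rpow_nonneg ht₀.le _), ← Real.rpow_mul ht₀.le]
        field_simp
    _ ≤ 1 / C' * t ^ (α - 1) :=
        mul_le_mul_of_nonneg_left (Real.rpow_le_rpow_of_exponent_ge ht₀ ht₁.le hexp)
          (by positivity)
    _ ≤ |f' t| := by
        rw [div_mul_eq_mul_div, one_mul, div_le_iff₀ hC', mul_comm]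
        exact hf't

theorem rpow_mul_eventuallyEq_nhdsGT_zero (p β : ℝ) :
    (fun t : ℝ ↦ t ^ (p * β)) =ᶠ[𝓝[>] 0] fun t ↦ (t ^ p) ^ β :=
  eventually_nhdsWithin_of_forall fun _ ht ↦ Real.rpow_mul (le_of_lt ht) p β

section ComposeRpow

variable {g : ℝ → ℝ} {p β : ℝ}

theorem isBigO_comp_rpow (hp : 0 < p) (hg : g =O[𝓝[>] 0] fun s ↦ s ^ β) :
    (fun t ↦ g (t ^ p)) =O[𝓝[>] 0] fun t ↦ t ^ (p * β) :=
  (hg.comp_tendsto (tendsto_rpow_nhdsGT_zero hp)).trans_eventuallyEq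
    (rpow_mul_eventuallyEq_nhdsGT_zero p β).symm

theorem isBigO_rpow_comp (hp : 0 < p) (hg : (fun s ↦ s ^ β) =O[𝓝[>] 0] g) :
    (fun t ↦ t ^ (p * β)) =O[𝓝[>] 0] fun t ↦ g (t ^ p) :=
  (rpow_mul_eventuallyEq_nhdsGT_zero p β).trans_isBigO
    (hg.comp_tendsto (tendsto_rpow_nhdsGT_zero hp))

theorem eventually_hasDerivAt_comp_rpow (hp : 0 < p)
    (hg : ∀ᶠ s in 𝓝[>] 0, DifferentiableAt ℝ g s) :
    ∀ᶠ t in 𝓝[>] 0, HasDerivAt (fun t ↦ g (t ^ p)) (deriv g (t ^ p) * (p * t ^ (p - 1))) t := by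
  filter_upwards [(tendsto_rpow_nhdsGT_zero hp).eventually hg, self_mem_nhdsWithin] with t hgt ht
  exact hgt.hasDerivAt.comp t (Real.hasDerivAt_rpow_const (Or.inl (ne_of_gt ht)))

theorem isBigO_deriv_comp_rpow (hp : 0 < p) (hg : ∀ᶠ s in 𝓝[>] 0, DifferentiableAt ℝ g s)
    (hg' : (fun s ↦ s ^ β) =O[𝓝[>] 0] deriv g) :
    (fun t ↦ t ^ (p * (β + 1) - 1)) =O[𝓝[>] 0] deriv (fun t ↦ g (t ^ p)) := by
  have hderiv : (fun t ↦ deriv g (t ^ p) * (p * t ^ (p - 1))) =ᶠ[𝓝[>] 0]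
      deriv (fun t ↦ g (t ^ p)) :=
    (eventually_hasDerivAt_comp_rpow hp hg).mono fun t ht ↦ ht.deriv.symm
  have hsplit : (fun t : ℝ ↦ t ^ (p * (β + 1) - 1)) =ᶠ[𝓝[>] 0]
      fun t ↦ t ^ (p * β) * t ^ (p - 1) := by
    filter_upwards [self_mem_nhdsWithin] with t ht
    rw [← Real.rpow_add ht]
    ring_nf
  exact hsplit.trans_isBigO (((isBigO_rpow_comp hp hg').mul
    (isBigO_self_const_mul hp.ne' _ _)).trans_eventuallyEq hderiv)

end ComposeRpow

/-- asymptotic Łojasiewicz gradient inequality in one variable for a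
Puiseux-type function `φ(t) = g(t^{1/q})`, where `g` is real-analytic near `0`,
vanishes at `0` and is not identically zero near `0`: there are `ρ, c > 0` and
`θ ∈ (0,1)` such that `φ` is differentiable on `(0, ρ)` and
`|φ′(t)| ≥ c·|φ(t)|^θ` there. -/
theorem puiseux_gradient_inequality
    (q : ℕ) (hq : 1 ≤ q) (g : ℝ → ℝ)
    (hg : ∃ U ∈ 𝓝 (0:ℝ), AnalyticOnNhd ℝ g U)
    (hg0 : g 0 = 0)
    (hgne : ∀ U ∈ 𝓝 (0:ℝ), ∃ t ∈ U, g t ≠ 0)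
    (φ : ℝ → ℝ) (hφ : ∀ t : ℝ, 0 ≤ t → φ t = g (t ^ ((q : ℝ))⁻¹)) :
    ∃ ρ > (0:ℝ), ∃ c > (0:ℝ), ∃ θ ∈ Set.Ioo (0:ℝ) 1,
      ∀ t ∈ Set.Ioo (0:ℝ) ρ,
        DifferentiableAt ℝ φ t ∧ |deriv φ t| ≥ c * |φ t| ^ θ := by
  obtain ⟨U, hU, hgU⟩ := hg
  have hg₀ : AnalyticAt ℝ g 0 := hgU 0 (mem_of_mem_nhds hU)
  obtain ⟨n, hn⟩ := hg₀.exists_analyticOrderAt_eq_succ hg0 (frequently_iff.2 (hgne _ ·))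
  have hp : (0 : ℝ) < (q : ℝ)⁻¹ := by positivity
  have hdiff : ∀ᶠ s in 𝓝[>] (0 : ℝ), DifferentiableAt ℝ g s :=
    (hg₀.eventually_analyticAt.filter_mono nhdsWithin_le_nhds).mono
      fun s hs ↦ hs.differentiableAt
  have hupper := isBigO_comp_rpow hp (β := n + 1) <|
    ((hg₀.isTheta_pow_of_analyticOrderAt_eq hn).1.mono nhdsWithin_le_nhds).congr_right
      fun s ↦ by rw [sub_zero, ← Real.rpow_natCast]; push_cast; rfl
  have hlower := isBigO_deriv_comp_rpow hp hdiff (β := n) <|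
    ((hg₀.deriv_isTheta_pow_of_analyticOrderAt_eq (by simpa [hg0] using hn)).2.mono
      nhdsWithin_le_nhds).congr_left fun s ↦ by rw [sub_zero, ← Real.rpow_natCast]
  set α : ℝ := (q : ℝ)⁻¹ * (n + 1)
  have hα : 0 < α := by positivity
  obtain ⟨c, hc, hineq⟩ := exists_pos_mul_rpow_le_of_isBigO_rpow hα hupper hlower
  obtain ⟨ρ, hρ, hsub⟩ := mem_nhdsGT_iff_exists_Ioo_subset.1
    ((eventually_hasDerivAt_comp_rpow hp hdiff).and hineq)
  refine ⟨ρ, hρ, c, hc, α / (α + 1), ⟨by positivity, (div_lt_one (by positivity)).2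
    (lt_add_one α)⟩, fun t ht ↦ ?_⟩
  have hφt : φ =ᶠ[𝓝 t] fun t ↦ g (t ^ (q : ℝ)⁻¹) :=
    eventually_of_mem (Ioi_mem_nhds ht.1) fun x hx ↦ hφ x (le_of_lt hx)
  rw [hφt.deriv_eq, hφt.differentiableAt_iff, hφt.eq_of_nhds]
  exact ⟨(hsub ht).1.differentiableAt, (hsub ht).2⟩
end
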